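/- In the setting of finite ABox A, TBox T, downward-closed consistency with cons T: an ABox axiom a ∈ A belongs to every repair of K = (A, T) if and only if a does not belong to any conflict (inclusion-minimal subset of A inconsistent with T). -/

import Mathlib

/-!
Take a conflict `C ∋ a`. Removing `a` from `C` leaves a consistent set, which extends to a
repair `R` since `A` is finite; `R` cannot contain `a`, for then it would contain the
inconsistent `C`. Conversely, if a repair `R` misses `a ∈ A`, then `insert a R` is
inconsistent by maximality, so it contains a conflict, and that conflict must use `a`
because `R` itself is consistent.
-/

section Repairs

variable {α : Type*} [DecidableEq α] (cons : Finset α → Prop) (A T : Finset α)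

def IsRepair (R : Finset α) : Prop :=
  Maximal (fun S => S ⊆ A ∧ cons (S ∪ T)) R

def IsConflict (C : Finset α) : Prop :=
  Minimal (fun S => S ⊆ A ∧ ¬ cons (S ∪ T)) C

variable {cons A T}

theorem isRepair_iff {R : Finset α} :
    IsRepair cons A T R ↔ R ⊆ A ∧ cons (R ∪ T) ∧
      ∀ R' : Finset α, R' ⊆ A → R ⊆ R' → cons (R' ∪ T) → R' = R := by
  constructor
  · rintro ⟨⟨hRA, hR⟩, hmax⟩
    exact ⟨hRA, hR, fun R' hR'A hRR' hR' => hRR'.antisymm' (hmax ⟨hR'A, hR'⟩ hRR')⟩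
  · rintro ⟨hRA, hR, hmax⟩
    exact ⟨⟨hRA, hR⟩, fun R' ⟨hR'A, hR'⟩ hRR' => (hmax R' hR'A hRR' hR').le⟩

theorem isConflict_iff {C : Finset α} :
    IsConflict cons A T C ↔ C ⊆ A ∧ ¬ cons (C ∪ T) ∧
      ∀ C' ⊆ C, ¬ cons (C' ∪ T) → C' = C := by
  constructor
  · rintro ⟨⟨hCA, hC⟩, hmin⟩
    exact ⟨hCA, hC, fun C' hC'C hC' => hC'C.antisymm (hmin ⟨hC'C.trans hCA, hC'⟩ hC'C)⟩
  · rintro ⟨hCA, hC, hmin⟩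
    exact ⟨⟨hCA, hC⟩, fun C' ⟨_, hC'⟩ hC'C => (hmin C' hC'C hC').ge⟩

theorem exists_isRepair_superset {E : Finset α} (hEA : E ⊆ A) (hE : cons (E ∪ T)) :
    ∃ R, E ⊆ R ∧ IsRepair cons A T R :=
  have hfin : {S | S ⊆ A ∧ cons (S ∪ T)}.Finite :=
    A.powerset.finite_toSet.subset fun _ hS => Finset.mem_powerset.mpr hS.1
  hfin.exists_le_maximal ⟨hEA, hE⟩

theorem exists_isConflict_subset {S : Finset α} (hSA : S ⊆ A) (hS : ¬ cons (S ∪ T)) :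
    ∃ C ⊆ S, IsConflict cons A T C :=
  exists_minimal_le_of_wellFoundedLT _ S ⟨hSA, hS⟩

theorem IsConflict.cons_erase {C : Finset α} (hC : IsConflict cons A T C) (a : α)
    (haC : a ∈ C) : cons (C.erase a ∪ T) := by
  by_contra hcons
  have hle : C ⊆ C.erase a :=
    hC.2 ⟨(C.erase_subset a).trans hC.1.1, hcons⟩ (C.erase_subset a)
  exact C.notMem_erase a (hle haC)

theorem IsRepair.not_cons_insert {R : Finset α} (hR : IsRepair cons A T R) {a : α}
    (ha : a ∈ A) (haR : a ∉ R) : ¬ cons (insert a R ∪ T) := fun hcons =>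
  haR (hR.2 ⟨Finset.insert_subset ha hR.1.1, hcons⟩ (R.subset_insert a) (R.mem_insert_self a))

theorem IsConflict.not_subset_of_isRepair (hanti : Antitone cons) {C R : Finset α}
    (hC : IsConflict cons A T C) (hR : IsRepair cons A T R) : ¬ C ⊆ R := fun hCR =>
  hC.1.2 (hanti (Finset.union_subset_union_left hCR) hR.1.2)

theorem forall_isRepair_mem_iff (hanti : Antitone cons) {a : α} (ha : a ∈ A) :
    (∀ R, IsRepair cons A T R → a ∈ R) ↔ ¬ ∃ C, IsConflict cons A T C ∧ a ∈ C := by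
  constructor
  · rintro hrepair ⟨C, hC, haC⟩
    obtain ⟨R, hCR, hR⟩ := exists_isRepair_superset
      ((C.erase_subset a).trans hC.1.1) (hC.cons_erase a haC)
    have hCR' : C ⊆ R := by
      rw [← Finset.insert_erase haC]
      exact Finset.insert_subset (hrepair R hR) hCR
    exact hC.not_subset_of_isRepair hanti hR hCR'
  · intro hconflict R hR
    by_contra haR
    obtain ⟨C, hCR, hC⟩ := exists_isConflict_subset (Finset.insert_subset ha hR.1.1)
      (hR.not_cons_insert ha haR)
    have haC : a ∈ C := by
      by_contra haC
      exact hC.not_subset_of_isRepair hanti hR ((Finset.subset_insert_iff_of_notMem haC).mp hCR)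
    exact hconflict ⟨C, hC, haC⟩

end Repairs

theorem in_every_repair_iff_no_conflict_general {α : Type*} [DecidableEq α]
    (A T : Finset α) (cons : Finset α → Prop)
    (hanti : ∀ S S' : Finset α, S ⊆ S' → cons S' → cons S)
    (a : α) (ha : a ∈ A) :
    (∀ R : Finset α, (R ⊆ A ∧ cons (R ∪ T) ∧
        ∀ R' : Finset α, R' ⊆ A → R ⊆ R' → cons (R' ∪ T) → R' = R) → a ∈ R) ↔
    ¬ ∃ C : Finset α, C ⊆ A ∧ ¬ cons (C ∪ T) ∧
        (∀ C' ⊆ C, ¬ cons (C' ∪ T) → C' = C) ∧ a ∈ C := by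
  simpa only [isRepair_iff, isConflict_iff, and_assoc] using
    forall_isRepair_mem_iff (T := T) (fun S S' h => hanti S S' h) ha

/-- An ABox axiom belongs to every repair iff it belongs to no conflict
(inclusion-minimal subset of A inconsistent with T). -/
theorem in_every_repair_iff_no_conflict {α : Type*} [DecidableEq α]
    (A T : Finset α) (cons : Finset α → Prop)
    (hanti : ∀ S S' : Finset α, S ⊆ S' → cons S' → cons S)
    (hT : cons T) (a : α) (ha : a ∈ A) :
    (∀ R : Finset α, (R ⊆ A ∧ cons (R ∪ T) ∧
        ∀ R' : Finset α, R' ⊆ A → R ⊆ R' → cons (R' ∪ T) → R' = R) → a ∈ R) ↔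
    ¬ ∃ C : Finset α, C ⊆ A ∧ ¬ cons (C ∪ T) ∧
        (∀ C' ⊆ C, ¬ cons (C' ∪ T) → C' = C) ∧ a ∈ C :=
  in_every_repair_iff_no_conflict_general A T cons hanti a ha
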